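/- Let Q = q_1 q_2 ... q_{m+r} be a word in the alphabet {E, N}. Define matroids M^0, M^1, ..., M^{m+r} by: M^0 is the empty matroid, and M^i = M^{i-1} + i (free extension by element i) if q_i = E, while M^i = M^{i-1} ⊕ i (add i as an isthmus) if q_i = N. Then M^{m+r} equals the generalized Catalan matroid M[Q], the lattice path matroid with upper path Q and lower path E^m N^r. -/

import Mathlib

/-- `X` is a partial transversal of the interval system `(N_j = [lo j, hi j])_{j : Fin r}`. -/
def IsPT (r : ℕ) (lo hi : Fin r → ℕ) (X : Finset ℕ) : Prop :=
  ∃ f : X → Fin r, Function.Injective f ∧ ∀ x : X, lo (f x) ≤ (x : ℕ) ∧ (x : ℕ) ≤ hi (f x)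

/-- The rank of an independence system: the supremum of the cardinalities of its
independent sets. -/
noncomputable def rankOf (Ind : Finset ℕ → Prop) : ℕ :=
  sSup {c : ℕ | ∃ I : Finset ℕ, Ind I ∧ I.card = c}

/-- Independent sets of the free extension `M + e`: sets not containing `e` that were
independent, together with sets `I ∪ {e}` with `I` independent of size `< r(M)`. -/
def freeExtInd (Ind : Finset ℕ → Prop) (e : ℕ) : Finset ℕ → Prop := fun I =>
  (e ∉ I ∧ Ind I) ∨ (e ∈ I ∧ Ind (I.erase e) ∧ (I.erase e).card < rankOf Ind)

/-- Independent sets of `M ⊕ e` (adding `e` as an isthmus, i.e. direct sum with the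
one-element rank-one matroid `U_{1,1}` on `{e}`): `I` is independent iff `I - e` is
independent in `M`. -/
def addIsthmusInd (Ind : Finset ℕ → Prop) (e : ℕ) : Finset ℕ → Prop := fun I =>
  Ind (I.erase e)

/-- The recursively constructed independence systems `M^0, M^1, ...` of
Theorem `thm:catrec`: `M^0` is the empty matroid, and `M^i` is the free extension
of `M^{i-1}` by `i` if the `i`-th letter of `Q` is `E` (`q i = false`), or `M^{i-1}`
plus the isthmus `i` if it is `N` (`q i = true`). -/
noncomputable def indSeq (q : ℕ → Bool) : ℕ → (Finset ℕ → Prop)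
  | 0 => fun I => I = ∅
  | (i + 1) =>
      if q (i + 1) then addIsthmusInd (indSeq q i) (i + 1)
      else freeExtInd (indSeq q i) (i + 1)

/-!
Both sides are described by the same counting condition: `I ⊆ [1, n]` and, for every `p ≤ n`,
`I` has at most as many elements in `[1, p]` as there are `N`s among `q_1, …, q_p`.

The condition is preserved by the recursion: an `N` at position `n + 1` raises the bound at
`p = n + 1` by one, which is exactly what adding an isthmus does, while an `E` leaves the bounds
alone and only caps `|I|` at the current rank, which is exactly what a free extension does.

On the transversal side the `N`s are the left endpoints of the intervals, so a partial
transversal satisfies the condition. Conversely, `x ∈ I` is sent greedily to the interval of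
index `c(x) - 1 + min_{y ∈ I, y ≥ x} (K(y) - c(y))`, where `c(y)` and `K(y)` count the elements
of `I` and the intervals starting in `[1, y]`.
-/

open Finset

namespace CatalanMatroid

def numLE (I : Finset ℕ) (p : ℕ) : ℕ := #(I.filter (· ≤ p))

def numN (q : ℕ → Bool) (p : ℕ) : ℕ := #((Icc 1 p).filter (q · = true))

def catalanInd (q : ℕ → Bool) (n : ℕ) (I : Finset ℕ) : Prop :=
  I ⊆ Icc 1 n ∧ ∀ p ≤ n, numLE I p ≤ numN q p

section Counting

lemma numLE_eq_card {I : Finset ℕ} {p : ℕ} (h : ∀ x ∈ I, x ≤ p) : numLE I p = #I := by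
  rw [numLE, filter_true_of_mem h]

lemma numLE_erase_of_lt {I : Finset ℕ} {e p : ℕ} (hp : p < e) :
    numLE (I.erase e) p = numLE I p := by
  rw [numLE, numLE, filter_erase, erase_eq_of_notMem]
  simp only [mem_filter, not_and, not_le]
  exact fun _ => hp

lemma numLE_le_numLE_add (I : Finset ℕ) (x y : ℕ) :
    numLE I y ≤ numLE I x + (y - x) := by
  calc numLE I y ≤ #(I.filter (· ≤ x) ∪ Ioc x y) := by
        refine card_le_card fun z hz => ?_
        simp only [mem_filter, mem_union, mem_Ioc] at hz ⊢
        rcases le_or_gt z x with h | h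
        exacts [Or.inl ⟨hz.1, h⟩, Or.inr ⟨h, hz.2⟩]
    _ ≤ numLE I x + (y - x) := by rw [← Nat.card_Ioc]; exact card_union_le _ _

lemma numLE_lt_numLE {I : Finset ℕ} {x y : ℕ} (hy : y ∈ I) (hxy : x < y) :
    numLE I x < numLE I y := by
  refine card_lt_card ((ssubset_iff_of_subset ?_).2 ⟨y, ?_, ?_⟩)
  · intro z hz
    simp only [mem_filter] at hz ⊢
    exact ⟨hz.1, hz.2.trans hxy.le⟩
  · simp [hy]
  · simp [hxy]

lemma one_le_numLE {I : Finset ℕ} {x : ℕ} (hx : x ∈ I) : 1 ≤ numLE I x :=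
  card_pos.2 ⟨x, mem_filter.2 ⟨hx, le_rfl⟩⟩

lemma numN_succ (q : ℕ → Bool) (n : ℕ) :
    numN q (n + 1) = numN q n + if q (n + 1) then 1 else 0 := by
  rw [numN, numN, ← insert_Icc_right_eq_Icc_add_one (by omega), filter_insert]
  split_ifs with h
  · exact card_insert_of_notMem (by simp)
  · rfl

end Counting

section CatalanInd

lemma card_le_numN_of_catalanInd {q : ℕ → Bool} {n : ℕ} {I : Finset ℕ}
    (h : catalanInd q n I) : #I ≤ numN q n := by
  rw [← numLE_eq_card fun x hx => (mem_Icc.1 (h.1 hx)).2]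
  exact h.2 n le_rfl

lemma rankOf_catalanInd (q : ℕ → Bool) (n : ℕ) : rankOf (catalanInd q n) = numN q n := by
  refine IsGreatest.csSup_eq ⟨⟨(Icc 1 n).filter (q · = true), ⟨filter_subset _ _, ?_⟩, rfl⟩, ?_⟩
  · refine fun p _ => card_le_card fun x hx => ?_
    simp only [mem_filter, mem_Icc] at hx ⊢
    exact ⟨⟨hx.1.1.1, hx.2⟩, hx.1.2⟩
  · rintro _ ⟨I, hI, rfl⟩
    exact card_le_numN_of_catalanInd hI

lemma catalanInd_succ_iff {q : ℕ → Bool} {n : ℕ} {I : Finset ℕ} :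
    catalanInd q (n + 1) I ↔ catalanInd q n (I.erase (n + 1)) ∧ #I ≤ numN q (n + 1) := by
  have hsub : I ⊆ Icc 1 (n + 1) ↔ I.erase (n + 1) ⊆ Icc 1 n := by
    simp only [subset_iff, mem_erase, mem_Icc]
    refine ⟨fun h x hx => ?_, fun h x hx => ?_⟩
    · have := h hx.2
      omega
    · by_cases hxn : x = n + 1
      · omega
      · have := h ⟨hxn, hx⟩
        omega
  simp only [catalanInd, ← hsub]
  refine ⟨fun ⟨hI, hle⟩ => ⟨⟨hI, fun p hp => ?_⟩, ?_⟩, fun ⟨⟨hI, hle⟩, hcard⟩ => ⟨hI, ?_⟩⟩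
  · rw [numLE_erase_of_lt (by omega)]
    exact hle p (by omega)
  · rw [← numLE_eq_card fun x hx => (mem_Icc.1 (hI hx)).2]
    exact hle _ le_rfl
  · intro p hp
    rcases hp.lt_or_eq with hp | rfl
    · rw [← numLE_erase_of_lt hp]
      exact hle p (by omega)
    · rwa [numLE_eq_card fun x hx => (mem_Icc.1 (hI hx)).2]

lemma addIsthmusInd_catalanInd {q : ℕ → Bool} {n : ℕ} (hq : q (n + 1) = true) :
    addIsthmusInd (catalanInd q n) (n + 1) = catalanInd q (n + 1) := by
  ext I
  rw [addIsthmusInd, catalanInd_succ_iff, numN_succ, if_pos hq, iff_self_and]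
  intro h
  calc #I ≤ #(I.erase (n + 1)) + 1 := Nat.sub_le_iff_le_add.1 pred_card_le_card_erase
    _ ≤ numN q n + 1 := Nat.add_le_add_right (card_le_numN_of_catalanInd h) 1

lemma freeExtInd_catalanInd {q : ℕ → Bool} {n : ℕ} (hq : q (n + 1) = false) :
    freeExtInd (catalanInd q n) (n + 1) = catalanInd q (n + 1) := by
  ext I
  rw [freeExtInd, catalanInd_succ_iff, numN_succ, if_neg (by simp [hq]), add_zero,
    rankOf_catalanInd]
  by_cases he : n + 1 ∈ I
  · rw [← card_erase_add_one he]
    simp only [he, not_true_eq_false, false_and, true_and, false_or, Nat.add_one_le_iff]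
  · rw [erase_eq_of_notMem he]
    simp only [he, not_false_eq_true, true_and, false_and, or_false, iff_self_and]
    exact card_le_numN_of_catalanInd

lemma indSeq_eq_catalanInd (q : ℕ → Bool) (n : ℕ) : indSeq q n = catalanInd q n := by
  induction n with
  | zero =>
    ext I
    simp only [indSeq, catalanInd, nonpos_iff_eq_zero, forall_eq]
    constructor
    · rintro rfl
      simp [numLE]
    · rintro ⟨h, -⟩
      simpa using h
  | succ n ih =>
    cases hq : q (n + 1)
    · simp only [indSeq, hq, ih, freeExtInd_catalanInd hq, Bool.false_eq_true, if_false]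
    · simp only [indSeq, hq, ih, addIsthmusInd_catalanInd hq, if_true]

end CatalanInd

section Greedy

variable (I : Finset ℕ) (K : ℕ → ℕ)

-- Only meaningful for `x ∈ I`: otherwise the infimum may be over `∅`, and `sInf ∅ = 0`.
noncomputable def slack (x : ℕ) : ℕ := sInf ((fun y => K y - numLE I y) '' {y | y ∈ I ∧ x ≤ y})

noncomputable def greedyIndex (x : ℕ) : ℕ := numLE I x - 1 + slack I K x

variable {I K}

lemma slack_le {x y : ℕ} (hy : y ∈ I) (hxy : x ≤ y) : slack I K x ≤ K y - numLE I y :=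
  Nat.sInf_le ⟨y, ⟨hy, hxy⟩, rfl⟩

lemma exists_slack_eq {x : ℕ} (hx : x ∈ I) :
    ∃ y ∈ I, x ≤ y ∧ K y - numLE I y = slack I K x := by
  obtain ⟨y, ⟨hy, hxy⟩, h⟩ := Nat.sInf_mem (⟨_, ⟨x, ⟨hx, le_rfl⟩, rfl⟩⟩ :
    ((fun y => K y - numLE I y) '' {y | y ∈ I ∧ x ≤ y}).Nonempty)
  exact ⟨y, hy, hxy, h⟩

lemma greedyIndex_lt {x : ℕ} (hx : x ∈ I) (hK : numLE I x ≤ K x) : greedyIndex I K x < K x := by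
  have := slack_le (K := K) hx le_rfl
  have := one_le_numLE hx
  unfold greedyIndex
  omega

lemma le_greedyIndex {m x : ℕ} (hx : x ∈ I) (hK : ∀ y ∈ I, y ≤ m + K y) :
    x ≤ m + greedyIndex I K x + 1 := by
  obtain ⟨y, hy, hxy, hslack⟩ := exists_slack_eq (K := K) hx
  have := hK y hy
  have := numLE_le_numLE_add I x y
  have := one_le_numLE hx
  unfold greedyIndex
  omega

lemma greedyIndex_strictMonoOn : StrictMonoOn (greedyIndex I K) I := by
  intro x hx y hy hxy
  have := numLE_lt_numLE hy hxy
  have := one_le_numLE hx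
  have : slack I K x ≤ slack I K y := by
    obtain ⟨z, hz, hyz, hslack⟩ := exists_slack_eq (K := K) hy
    exact hslack ▸ slack_le hz (hxy.le.trans hyz)
  unfold greedyIndex
  omega

end Greedy

section Transversal

variable {r : ℕ} {lo : Fin r → ℕ}

def numStarted (lo : Fin r → ℕ) (p : ℕ) : ℕ := #(univ.filter (lo · ≤ p))

lemma numStarted_le (lo : Fin r → ℕ) (p : ℕ) : numStarted lo p ≤ r :=
  (card_filter_le _ _).trans (card_fin r).le

lemma lt_numStarted_iff (hlo : StrictMono lo) {p : ℕ} {j : Fin r} :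
    (j : ℕ) < numStarted lo p ↔ lo j ≤ p := by
  refine ⟨fun h => not_lt.1 fun hj => ?_, fun h => ?_⟩
  · have : numStarted lo p ≤ j := by
      rw [← Fin.card_Iio j]
      exact card_le_card fun a ha => mem_Iio.2 (hlo.lt_iff_lt.1 ((mem_filter.1 ha).2.trans_lt hj))
    omega
  · have : (j : ℕ) + 1 ≤ numStarted lo p := by
      rw [← Fin.card_Iic j]
      exact card_le_card fun a ha =>
        mem_filter.2 ⟨mem_univ _, (hlo.monotone (mem_Iic.1 ha)).trans h⟩
    omega

lemma numStarted_apply_le (hlo : StrictMono lo) (j : Fin r) : numStarted lo (lo j) ≤ j + 1 := by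
  rw [← Fin.card_Iic j]
  exact card_le_card fun a ha => mem_Iic.2 (hlo.le_iff_le.1 (mem_filter.1 ha).2)

lemma le_add_numStarted {m p : ℕ} (hlo : StrictMono lo) (hhi : ∀ j : Fin r, lo j ≤ m + j + 1)
    (hp : p ≤ m + r) : p ≤ m + numStarted lo p := by
  by_cases h : numStarted lo p < r
  · have h₁ : lo ⟨_, h⟩ ≤ m + numStarted lo p + 1 := hhi ⟨_, h⟩
    have h₂ : ¬ lo ⟨_, h⟩ ≤ p := (lt_numStarted_iff hlo).not.1 (lt_irrefl _)
    omega
  · omega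

lemma numLE_le_numStarted_of_isPT {hi : Fin r → ℕ} {I : Finset ℕ} (h : IsPT r lo hi I) (p : ℕ) :
    numLE I p ≤ numStarted lo p := by
  obtain ⟨f, hf, hfI⟩ := h
  rw [numLE, ← card_attach]
  refine card_le_card_of_injOn (fun x => f ⟨x, (mem_filter.1 x.2).1⟩) (fun x _ => ?_)
    fun x _ y _ hxy => ?_
  · exact mem_filter.2 ⟨mem_univ _, (hfI _).1.trans (mem_filter.1 x.2).2⟩
  · exact Subtype.ext (by simpa using congrArg Subtype.val (hf hxy))

lemma isPT_of_forall_numLE_le {m : ℕ} (hlo : StrictMono lo)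
    (hhi : ∀ j : Fin r, lo j ≤ m + j + 1) {I : Finset ℕ} (hI : ∀ x ∈ I, x ≤ m + r)
    (hcount : ∀ x ∈ I, numLE I x ≤ numStarted lo x) :
    IsPT r lo (fun j => m + (j : ℕ) + 1) I := by
  have hlt : ∀ x ∈ I, greedyIndex I (numStarted lo) x < numStarted lo x :=
    fun x hx => greedyIndex_lt hx (hcount x hx)
  refine ⟨fun x => ⟨greedyIndex I (numStarted lo) x, (hlt x x.2).trans_le (numStarted_le lo x)⟩,
    fun x y hxy => ?_, fun x => ⟨?_, ?_⟩⟩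
  · exact Subtype.ext (greedyIndex_strictMonoOn.injOn x.2 y.2 (congrArg Fin.val hxy))
  · exact (lt_numStarted_iff hlo).1 (hlt x x.2)
  · exact le_greedyIndex x.2 fun y hy => le_add_numStarted hlo hhi (hI y hy)

lemma isPT_iff_forall_numLE_le {m : ℕ} (hlo : StrictMono lo)
    (hhi : ∀ j : Fin r, lo j ≤ m + j + 1) {I : Finset ℕ} (hI : ∀ x ∈ I, x ≤ m + r) :
    IsPT r lo (fun j => m + (j : ℕ) + 1) I ↔ ∀ p ≤ m + r, numLE I p ≤ numStarted lo p :=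
  ⟨fun h p _ => numLE_le_numStarted_of_isPT h p,
    fun h => isPT_of_forall_numLE_le hlo hhi hI fun x hx => h x (hI x hx)⟩

end Transversal

section Word

variable {n m r : ℕ} {q : ℕ → Bool} {lo : Fin r → ℕ}

lemma numStarted_eq_numN (hlo : Function.Injective lo)
    (hloN : ∀ j, lo j ∈ Icc 1 n ∧ q (lo j) = true)
    (hall : ∀ p ∈ Icc 1 n, q p = true → ∃ j, lo j = p) {p : ℕ} (hp : p ≤ n) :
    numStarted lo p = numN q p := by
  refine card_bij (fun j _ => lo j) (fun j hj => ?_) (fun a _ b _ hab => hlo hab) (fun x hx => ?_)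
  · simp only [mem_filter, mem_univ, true_and, mem_Icc] at hj ⊢
    exact ⟨⟨(mem_Icc.1 (hloN j).1).1, hj⟩, (hloN j).2⟩
  · simp only [mem_filter, mem_Icc] at hx
    obtain ⟨j, rfl⟩ := hall x (mem_Icc.2 ⟨hx.1.1, hx.1.2.trans hp⟩) hx.2
    exact ⟨j, mem_filter.2 ⟨mem_univ _, hx.1.2⟩, rfl⟩

lemma lo_le_add_add_one (hlo : StrictMono lo)
    (hloN : ∀ j, lo j ∈ Icc 1 (m + r) ∧ q (lo j) = true)
    (hall : ∀ p ∈ Icc 1 (m + r), q p = true → ∃ j, lo j = p)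
    (hm : #((Icc 1 (m + r)).filter (q · = false)) = m) (j : Fin r) : lo j ≤ m + j + 1 := by
  have hj := mem_Icc.1 (hloN j).1
  have hN : numN q (lo j) ≤ j + 1 :=
    numStarted_eq_numN hlo.injective hloN hall hj.2 ▸ numStarted_apply_le hlo j
  have hE : #((Icc 1 (lo j)).filter (q · = false)) ≤ m :=
    hm ▸ card_le_card (filter_subset_filter _ (Icc_subset_Icc_right hj.2))
  have hsplit := card_filter_add_card_filter_not (s := Icc 1 (lo j)) (q · = true)
  simp only [Bool.not_eq_true, Nat.card_Icc] at hsplit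
  rw [numN] at hN
  omega

end Word

end CatalanMatroid

/-- **Generalized Catalan matroids via free extensions and isthmuses.**
Let `Q = q_1 ⋯ q_{m+r}` be a word in `{E, N}` (encoded by `q : ℕ → Bool`, `true = N`)
with `m` letters `E` and `r` letters `N`, the `j`-th `N` occurring at position `lo j`.
Then the matroid `M^{m+r}` built recursively from the empty matroid (free extension
at each `E`, adding an isthmus at each `N`) equals the generalized Catalan matroid
`M[Q]` (with lower path `E^m N^r`): both have ground set `[1, m+r]` and the
independent sets of `M^{m+r}` are exactly the partial transversals of the interval
system `N_j = [lo j, m + j]` presenting `M[Q]`. -/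
theorem stmt11 (m r : ℕ) (q : ℕ → Bool) (lo : Fin r → ℕ)
    (hmono : StrictMono lo)
    (hloN : ∀ j : Fin r, lo j ∈ Finset.Icc 1 (m + r) ∧ q (lo j) = true)
    (hall : ∀ p ∈ Finset.Icc 1 (m + r), q p = true → ∃ j : Fin r, lo j = p)
    (hm : ((Finset.Icc 1 (m + r)).filter (fun p => q p = false)).card = m) :
    ∀ I : Finset ℕ, indSeq q (m + r) I ↔
      (I ⊆ Finset.Icc 1 (m + r) ∧ IsPT r lo (fun j => m + (j : ℕ) + 1) I) := by
  intro I
  have hhi := CatalanMatroid.lo_le_add_add_one hmono hloN hall hm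
  rw [CatalanMatroid.indSeq_eq_catalanInd, CatalanMatroid.catalanInd]
  refine and_congr_right fun hI => ?_
  rw [CatalanMatroid.isPT_iff_forall_numLE_le hmono hhi fun x hx => (mem_Icc.1 (hI hx)).2]
  exact forall₂_congr fun p hp => by
    rw [CatalanMatroid.numStarted_eq_numN hmono.injective hloN hall hp]
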